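/- Consider states τˣ_{CB} on H_C ⊗ H_B with dim(H_C) = d, all having the same reduced state τ_B = Tr_C(τˣ_{CB}) on H_B, and each with Schmidt number at most k. For any prior probabilities p_x and any POVM {N_z} on H_C ⊗ H_B, the guessing probability P_g = Σₓ p_x Tr(τˣ_{CB} N_x) satisfies P_g ≤ k·d·(max_x p_x). -/

import Mathlib

open Matrix BigOperators
open scoped ComplexOrder

/-- Partial trace over the first tensor factor `C`. -/
noncomputable def ptraceC {C B : Type*} [Fintype C] (M : Matrix (C × B) (C × B) ℂ) :
    Matrix B B ℂ :=
  Matrix.of fun i j => ∑ c, M (c, i) (c, j)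

/-- Rank-one operator `|φ⟩⟨φ|`. -/
noncomputable def outer {ι : Type*} (φ : ι → ℂ) : Matrix ι ι ℂ :=
  Matrix.of fun i j => φ i * star (φ j)

/-!
Write `τˣ` as a sum of rank-one terms `|v⟩⟨v|` of Schmidt rank at most `k`, and `Nₓ` as a sum of
rank-one terms `|u⟩⟨u|`. Viewing `v` and `u` as `B × C` matrices `X` and `Y`, the overlap
`|⟨v, u⟩|²` is `|tr G|²` for `G = Xᴴ Y`, a matrix of rank at most `k` whose squared Frobenius norm
is `Tr[Tr_C |v⟩⟨v| · Tr_C |u⟩⟨u|]`. Cauchy–Schwarz against the orthogonal projection onto the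
range of `G` gives `|tr G|² ≤ rank G · ‖G‖²`, hence `Tr[τˣ Nₓ] ≤ k · Tr[τ_B · Tr_C Nₓ]`. Summing
over `x`, `∑ₓ Tr_C Nₓ = Tr_C 1 = d · 1` bounds the total success weight by `k d`.
-/

lemma outer_eq_vecMulVec {ι : Type*} (φ : ι → ℂ) : outer φ = vecMulVec φ (star φ) := rfl

namespace Matrix

variable {m n : Type*} [Fintype m] [Fintype n]

lemma normSq_trace_conjTranspose_mul_le (X Y : Matrix m n ℂ) :
    Complex.normSq (Xᴴ * Y).trace ≤ (Xᴴ * X).trace.re * (Yᴴ * Y).trace.re := by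
  have hinner : ∀ Z W : Matrix m n ℂ,
      inner ℂ (WithLp.toLp 2 (vec Z)) (WithLp.toLp 2 (vec W)) = (Zᴴ * W).trace := fun Z W => by
    rw [EuclideanSpace.inner_toLp_toLp, dotProduct_comm, star_vec_dotProduct_vec]
  have := inner_mul_inner_self_le (𝕜 := ℂ) (WithLp.toLp 2 (vec X)) (WithLp.toLp 2 (vec Y))
  rw [norm_inner_symm (WithLp.toLp 2 (vec Y)), hinner, hinner, hinner] at this
  rwa [Complex.normSq_eq_norm_sq, sq]

variable [DecidableEq n]

lemma exists_isStarProjection_mul_eq_self (G : Matrix n n ℂ) :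
    ∃ P : Matrix n n ℂ, IsStarProjection P ∧ P * G = G ∧ P.trace = G.rank := by
  set K := LinearMap.range (toEuclideanLin G)
  set e := toEuclideanCLM (𝕜 := ℂ) (n := n)
  have hKG : K.starProjection * e G = e G := by
    ext1 x
    exact K.starProjection_eq_self_iff.mpr (LinearMap.mem_range_self _ x)
  have hproj : LinearMap.IsProj K (K.starProjection : EuclideanSpace ℂ n →ₗ[ℂ] _) :=
    ⟨K.starProjection_apply_mem, fun _ hx => K.starProjection_eq_self_iff.mpr hx⟩
  refine ⟨e.symm K.starProjection, ?_, ?_, ?_⟩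
  · exact isStarProjection_starProjection.map
      (F := (EuclideanSpace ℂ n →L[ℂ] EuclideanSpace ℂ n) ≃⋆ₐ[ℂ] Matrix n n ℂ) e.symm
  · simpa only [map_mul, e.symm_apply_apply] using congrArg e.symm hKG
  · rw [rank_eq_finrank_range_toLin G (PiLp.basisFun 2 ℂ n) (PiLp.basisFun 2 ℂ n),
      ← toLpLin_eq_toLin, ← hproj.trace, LinearMap.trace_eq_matrix_trace ℂ (PiLp.basisFun 2 ℂ n)]
    rfl

lemma normSq_trace_le_rank_mul (G : Matrix n n ℂ) :
    Complex.normSq G.trace ≤ G.rank * (Gᴴ * G).trace.re := by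
  obtain ⟨P, hP, hPG, hPtr⟩ := exists_isStarProjection_mul_eq_self G
  have hPH : Pᴴ = P := hP.isSelfAdjoint
  have hPP : Pᴴ * P = P := by rw [hPH]; exact hP.isIdempotentElem
  calc Complex.normSq G.trace = Complex.normSq (Pᴴ * G).trace := by rw [hPH, hPG]
    _ ≤ (Pᴴ * P).trace.re * (Gᴴ * G).trace.re := normSq_trace_conjTranspose_mul_le P G
    _ = G.rank * (Gᴴ * G).trace.re := by rw [hPP, hPtr, Complex.natCast_re]

lemma PosSemidef.exists_eq_sum_outer {A : Matrix n n ℂ} (hA : A.PosSemidef) :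
    ∃ u : n → n → ℂ, A = ∑ i, outer (u i) := by
  open scoped MatrixOrder in
  obtain ⟨R, rfl⟩ := CStarAlgebra.nonneg_iff_eq_star_mul_self.mp hA.nonneg
  refine ⟨fun i j => star (R i j), ?_⟩
  ext j l
  simp [outer, mul_apply, Matrix.sum_apply]

lemma PosSemidef.trace_mul_nonneg {A B : Matrix n n ℂ} (hA : A.PosSemidef) (hB : B.PosSemidef) :
    0 ≤ (A * B).trace := by
  obtain ⟨u, rfl⟩ := hB.exists_eq_sum_outer
  rw [Finset.mul_sum, trace_sum]
  refine Finset.sum_nonneg fun i _ => ?_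
  have : (A * outer (u i)).trace = star (u i) ⬝ᵥ A *ᵥ u i := by
    rw [outer_eq_vecMulVec, mul_vecMulVec, trace_vecMulVec, dotProduct_comm]
  exact this ▸ hA.dotProduct_mulVec_nonneg (u i)

end Matrix

lemma trace_outer_mul_outer {ι : Type*} [Fintype ι] (v u : ι → ℂ) :
    (outer v * outer u).trace = (star v ⬝ᵥ u) * (star u ⬝ᵥ v) := by
  rw [outer_eq_vecMulVec, outer_eq_vecMulVec, vecMulVec_mul_vecMulVec, trace_vecMulVec,
    dotProduct_smul, smul_eq_mul, dotProduct_comm v]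

section PartialTrace

variable {C B : Type*} [Fintype C]

lemma ptraceC_sum {ι : Type*} (s : Finset ι) (M : ι → Matrix (C × B) (C × B) ℂ) :
    ptraceC (∑ i ∈ s, M i) = ∑ i ∈ s, ptraceC (M i) := by
  ext i j
  simp only [ptraceC, of_apply, Matrix.sum_apply]
  exact Finset.sum_comm

lemma trace_ptraceC [Fintype B] (M : Matrix (C × B) (C × B) ℂ) : (ptraceC M).trace = M.trace := by
  simp only [trace, diag, ptraceC, of_apply, Fintype.sum_prod_type]
  exact Finset.sum_comm

lemma ptraceC_one [DecidableEq C] [DecidableEq B] :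
    ptraceC (1 : Matrix (C × B) (C × B) ℂ) = (Fintype.card C : ℂ) • 1 := by
  ext i j
  by_cases h : i = j <;> simp [ptraceC, one_apply, h]

lemma ptraceC_outer_vec (X : Matrix B C ℂ) : ptraceC (outer (vec X)) = X * Xᴴ := by
  ext i j
  simp [ptraceC, outer, vec, mul_apply]

lemma sum_trace_mul_ptraceC_of_sum_eq_one [Fintype B] [DecidableEq C] [DecidableEq B] {X : Type*}
    [Fintype X] (ρ : Matrix B B ℂ) (N : X → Matrix (C × B) (C × B) ℂ) (hN : ∑ x, N x = 1) :
    ∑ x, (ρ * ptraceC (N x)).trace = Fintype.card C * ρ.trace := by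
  rw [← trace_sum, ← Finset.mul_sum, ← ptraceC_sum, hN, ptraceC_one, Matrix.mul_smul, mul_one,
    trace_smul, smul_eq_mul]

end PartialTrace

section SchmidtRank

variable {C B : Type*} [Fintype C] [Fintype B] [DecidableEq C] {k : ℕ}

lemma re_trace_outer_mul_outer_le (v u : C × B → ℂ) (hv : (ptraceC (outer v)).rank ≤ k) :
    (outer v * outer u).trace.re ≤ k * (ptraceC (outer v) * ptraceC (outer u)).trace.re := by
  obtain ⟨X, rfl⟩ : ∃ X : Matrix B C ℂ, vec X = v := vec_bijective.surjective v
  obtain ⟨Y, rfl⟩ : ∃ Y : Matrix B C ℂ, vec Y = u := vec_bijective.surjective u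
  set G := Xᴴ * Y
  have hlhs : (outer (vec X) * outer (vec Y)).trace = Complex.normSq G.trace := by
    rw [trace_outer_mul_outer, star_vec_dotProduct_vec, star_vec_dotProduct_vec,
      ← Complex.mul_conj, ← conjTranspose_conjTranspose X, ← conjTranspose_mul,
      trace_conjTranspose, conjTranspose_conjTranspose]
    rfl
  have hrhs : (ptraceC (outer (vec X)) * ptraceC (outer (vec Y))).trace = (Gᴴ * G).trace := by
    rw [ptraceC_outer_vec, ptraceC_outer_vec, conjTranspose_mul, conjTranspose_conjTranspose,
      ← Matrix.mul_assoc, ← Matrix.mul_assoc, trace_mul_comm]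
    simp only [Matrix.mul_assoc]
  have hrank : (G.rank : ℝ) ≤ k := by
    have : G.rank ≤ X.rank := (rank_mul_le_left _ _).trans (rank_conjTranspose X).le
    rw [ptraceC_outer_vec, rank_self_mul_conjTranspose] at hv
    exact_mod_cast this.trans hv
  have hG : 0 ≤ (Gᴴ * G).trace.re :=
    (Complex.nonneg_iff.mp (posSemidef_conjTranspose_mul_self G).trace_nonneg).1
  rw [hlhs, hrhs, Complex.ofReal_re]
  calc Complex.normSq G.trace ≤ G.rank * (Gᴴ * G).trace.re := normSq_trace_le_rank_mul G
    _ ≤ k * (Gᴴ * G).trace.re := mul_le_mul_of_nonneg_right hrank hG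

lemma re_trace_sum_outer_mul_le [DecidableEq B] {ι : Type*} [Fintype ι] (v : ι → C × B → ℂ)
    (hv : ∀ i, (ptraceC (outer (v i))).rank ≤ k) {σ : Matrix (C × B) (C × B) ℂ}
    (hσ : σ.PosSemidef) :
    ((∑ i, outer (v i)) * σ).trace.re ≤
      k * (ptraceC (∑ i, outer (v i)) * ptraceC σ).trace.re := by
  obtain ⟨u, rfl⟩ := hσ.exists_eq_sum_outer
  rw [ptraceC_sum, ptraceC_sum, Finset.sum_mul_sum, Finset.sum_mul_sum]
  simp only [trace_sum, Complex.re_sum, Finset.mul_sum]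
  exact Finset.sum_le_sum fun i _ => Finset.sum_le_sum fun j _ =>
    re_trace_outer_mul_outer_le _ _ (hv i)

end SchmidtRank

theorem guessing_probability_bound_general {C B X : Type*} [Fintype C] [Fintype B] [Fintype X]
    [DecidableEq C] [DecidableEq B] [Nonempty X]
    (d k : ℕ) (hd : Fintype.card C = d)
    (τ : X → Matrix (C × B) (C × B) ℂ)
    (hτpsd : ∀ x, (τ x).PosSemidef) (hτtr : ∀ x, (τ x).trace = 1)
    (hmarg : ∀ x x', ptraceC (τ x) = ptraceC (τ x'))
    (hSchmidt : ∀ x, ∃ (m : ℕ) (v : Fin m → C × B → ℂ),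
      τ x = ∑ i, outer (v i) ∧ ∀ i, (ptraceC (outer (v i))).rank ≤ k)
    (p : X → ℝ) (hp0 : ∀ x, 0 ≤ p x)
    (N : X → Matrix (C × B) (C × B) ℂ)
    (hNpsd : ∀ x, (N x).PosSemidef) (hNsum : ∑ x, N x = 1) :
    ∑ x, p x * ((τ x * N x).trace).re ≤
      (k : ℝ) * d * (Finset.univ.sup' Finset.univ_nonempty p) := by
  obtain ⟨x₀⟩ := ‹Nonempty X›
  set pmax := Finset.univ.sup' Finset.univ_nonempty p
  have hp_le : ∀ x, p x ≤ pmax := fun x => Finset.le_sup' p (Finset.mem_univ x)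
  have hsuccess_nonneg : ∀ x, 0 ≤ (τ x * N x).trace.re := fun x =>
    (Complex.nonneg_iff.mp ((hτpsd x).trace_mul_nonneg (hNpsd x))).1
  have hsuccess_le : ∀ x, (τ x * N x).trace.re ≤ k * (ptraceC (τ x₀) * ptraceC (N x)).trace.re := by
    intro x
    obtain ⟨m, v, hτ, hv⟩ := hSchmidt x
    rw [← hmarg x x₀, hτ]
    exact re_trace_sum_outer_mul_le v hv (hNpsd x)
  have hmarginal : ∑ x, (ptraceC (τ x₀) * ptraceC (N x)).trace.re = d := by
    rw [← Complex.re_sum, sum_trace_mul_ptraceC_of_sum_eq_one _ N hNsum, trace_ptraceC, hτtr, hd,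
      mul_one, Complex.natCast_re]
  calc ∑ x, p x * (τ x * N x).trace.re
      ≤ ∑ x, pmax * (τ x * N x).trace.re :=
        Finset.sum_le_sum fun x _ => mul_le_mul_of_nonneg_right (hp_le x) (hsuccess_nonneg x)
    _ ≤ ∑ x, pmax * (k * (ptraceC (τ x₀) * ptraceC (N x)).trace.re) :=
        Finset.sum_le_sum fun x _ =>
          mul_le_mul_of_nonneg_left (hsuccess_le x) ((hp0 x₀).trans (hp_le x₀))
    _ = k * d * pmax := by rw [← Finset.mul_sum, ← Finset.mul_sum, hmarginal, mul_comm]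

/-- states `τˣ` on `H_C ⊗ H_B` (with `dim H_C = d`), all with the same marginal
on `H_B` and Schmidt number at most `k`, allow at most guessing probability
`P_g ≤ k·d·(max_x p_x)` for any priors `p` and any POVM `{N_x}`. -/
theorem guessing_probability_bound {C B X : Type*} [Fintype C] [Fintype B] [Fintype X]
    [DecidableEq C] [DecidableEq B] [Nonempty X]
    (d k : ℕ) (hd : Fintype.card C = d)
    (τ : X → Matrix (C × B) (C × B) ℂ)
    (hτpsd : ∀ x, (τ x).PosSemidef) (hτtr : ∀ x, (τ x).trace = 1)
    (hmarg : ∀ x x', ptraceC (τ x) = ptraceC (τ x'))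
    (hSchmidt : ∀ x, ∃ (m : ℕ) (v : Fin m → C × B → ℂ),
      τ x = ∑ i, outer (v i) ∧ ∀ i, (ptraceC (outer (v i))).rank ≤ k)
    (p : X → ℝ) (hp0 : ∀ x, 0 ≤ p x) (hp1 : ∑ x, p x = 1)
    (N : X → Matrix (C × B) (C × B) ℂ)
    (hNpsd : ∀ x, (N x).PosSemidef) (hNsum : ∑ x, N x = 1) :
    ∑ x, p x * ((τ x * N x).trace).re ≤
      (k : ℝ) * d * (Finset.univ.sup' Finset.univ_nonempty p) :=
  guessing_probability_bound_general d k hd τ hτpsd hτtr hmarg hSchmidt p hp0 N hNpsd hNsum
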